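/- Let 0<q<1 and let {P_n}_{n≥0} be a sequence of monic real polynomials, deg P_n = n, orthogonal with respect to a weight function w positive on an open interval (a,b). Suppose there is a real polynomial π of degree at most 4 and real constants a_{n,n+k} (k ∈ {−2,−1,0,1,2}) with a_{n,n−2} ≠ 0 such that π(x)·(D_q² P_n)(x) = Σ_{k=−2}^{2} a_{n,n+k} P_{n+k}(x) for all n ≥ 2. Then the sequence {D_q² P_j}_{j≥2} is orthogonal with respect to π·w on (a,b), i.e. ∫_a^b (D_q² P_m)(x)(D_q² P_n)(x) π(x) w(x) dx = 0 for all m ≠ n with m,n ≥ 2, and ∫_a^b ((D_q² P_n)(x))² π(x) w(x) dx ≠ 0 for all n ≥ 2. -/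

import Mathlib

set_option autoImplicit false

open Polynomial MeasureTheory

/-- `γ_n = (q^{n/2} - q^{-n/2})/(q^{1/2} - q^{-1/2})`. -/
noncomputable def gammaAW (q : ℝ) (n : ℕ) : ℝ :=
  ((Real.sqrt q) ^ n - ((Real.sqrt q)⁻¹) ^ n) / (Real.sqrt q - (Real.sqrt q)⁻¹)

/-- `g` is the Askey–Wilson divided difference `D_q f`. -/
def IsAWDq (q : ℝ) (f g : Polynomial ℝ) : Prop :=
  ∀ z : ℝ, z ≠ 0 → z ^ 2 ≠ 1 →
    g.eval ((z + z⁻¹) / 2) =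
      (f.eval ((Real.sqrt q * z + (Real.sqrt q)⁻¹ * z⁻¹) / 2) -
          f.eval (((Real.sqrt q)⁻¹ * z + Real.sqrt q * z⁻¹) / 2)) /
        ((Real.sqrt q - (Real.sqrt q)⁻¹) * (z - z⁻¹) / 2)

/-- The Askey–Wilson operator `D_q` on polynomials. -/
noncomputable def awDq (q : ℝ) (f : Polynomial ℝ) : Polynomial ℝ :=
  letI := Classical.propDecidable (∃ g, IsAWDq q f g)
  if h : ∃ g, IsAWDq q f g then h.choose else 0

/-- `g` is the Askey–Wilson average `S_q f`. -/
def IsAWSq (q : ℝ) (f g : Polynomial ℝ) : Prop :=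
  ∀ z : ℝ, z ≠ 0 → z ^ 2 ≠ 1 →
    g.eval ((z + z⁻¹) / 2) =
      (f.eval ((Real.sqrt q * z + (Real.sqrt q)⁻¹ * z⁻¹) / 2) +
          f.eval (((Real.sqrt q)⁻¹ * z + Real.sqrt q * z⁻¹) / 2)) / 2

/-- The Askey–Wilson averaging operator `S_q` on polynomials. -/
noncomputable def awSq (q : ℝ) (f : Polynomial ℝ) : Polynomial ℝ :=
  letI := Classical.propDecidable (∃ g, IsAWSq q f g)
  if h : ∃ g, IsAWSq q f g then h.choose else 0


open Polynomial Polynomial.Chebyshev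


lemma evalT : ∀ (n : ℕ) (y : ℝ), y ≠ 0 →
    (T ℝ (n : ℤ)).eval ((y + y⁻¹) / 2) = (y ^ n + (y⁻¹) ^ n) / 2 := by
  intro n
  induction n using Nat.strong_induction_on with
  | _ n ih =>
    match n with
    | 0 => intro y hy; simp [T_zero]
    | 1 => intro y hy; simp [T_one]
    | (k+2) =>
      intro y hy
      have h1 := ih (k+1) (by omega) y hy
      have h0 := ih k (by omega) y hy
      have hinv : y * y⁻¹ = 1 := mul_inv_cancel₀ hy
      rw [show ((k+2 : ℕ) : ℤ) = (k : ℤ) + 2 by push_cast; ring, T_add_two]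
      simp only [eval_sub, eval_mul, eval_ofNat, eval_X]
      rw [show ((k : ℤ) + 1) = ((k+1 : ℕ) : ℤ) by push_cast; ring, h1, h0]
      push_cast
      linear_combination ((y^k + (y⁻¹)^k)/2) * hinv

lemma evalU : ∀ (n : ℕ) (y : ℝ), y ≠ 0 →
    (y - y⁻¹) * (U ℝ (n : ℤ)).eval ((y + y⁻¹) / 2) = y ^ (n+1) - (y⁻¹) ^ (n+1) := by
  intro n
  induction n using Nat.strong_induction_on with
  | _ n ih =>
    match n with
    | 0 => intro y hy; simp [U_zero]
    | 1 =>
      intro y hy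
      have hinv : y * y⁻¹ = 1 := mul_inv_cancel₀ hy
      simp only [Nat.cast_one, U_one, eval_mul, eval_ofNat, eval_X]
      ring
    | (k+2) =>
      intro y hy
      have h1 := ih (k+1) (by omega) y hy
      have h0 := ih k (by omega) y hy
      have hinv : y * y⁻¹ = 1 := mul_inv_cancel₀ hy
      rw [show ((k+2 : ℕ) : ℤ) = (k : ℤ) + 2 by push_cast; ring, U_add_two]
      simp only [eval_sub, eval_mul, eval_ofNat, eval_X]
      rw [show ((k : ℤ) + 1) = ((k+1 : ℕ) : ℤ) by push_cast; ring]
      linear_combination (y + y⁻¹) * h1 - h0 + (y^(k+1) - (y⁻¹)^(k+1)) * hinv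

lemma degT : ∀ n : ℕ, (T ℝ (n : ℤ)).natDegree ≤ n ∧ (T ℝ (n : ℤ)).coeff n = 2 ^ (n - 1) := by
  intro n
  induction n using Nat.strong_induction_on with
  | _ n ih =>
    match n with
    | 0 => simp [T_zero]
    | 1 => simp [T_one]
    | (k+2) =>
      obtain ⟨hd1, hc1⟩ := ih (k+1) (by omega)
      obtain ⟨hd0, hc0⟩ := ih k (by omega)
      rw [show ((k+2 : ℕ) : ℤ) = (k : ℤ) + 2 by push_cast; ring, T_add_two]
      rw [show ((k : ℤ) + 1) = ((k+1 : ℕ) : ℤ) by push_cast; ring]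
      constructor
      · refine le_trans (natDegree_sub_le _ _) ?_
        simp only [max_le_iff]
        constructor
        · refine le_trans (natDegree_mul_le) ?_
          refine le_trans (add_le_add natDegree_mul_le hd1) ?_
          simp [natDegree_X]
          omega
        · omega
      · have hz : (T ℝ ((k:ℕ):ℤ)).coeff (k+2) = 0 :=
          coeff_eq_zero_of_natDegree_lt (by omega)
        rw [coeff_sub, hz, sub_zero, mul_assoc, coeff_ofNat_mul,
          show k+2 = (k+1)+1 by ring, coeff_X_mul, hc1]
        norm_num
        ring

lemma degU : ∀ n : ℕ, (U ℝ (n : ℤ)).natDegree ≤ n ∧ (U ℝ (n : ℤ)).coeff n = 2 ^ n := by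
  intro n
  induction n using Nat.strong_induction_on with
  | _ n ih =>
    match n with
    | 0 => simp [U_zero]
    | 1 => simp [U_one]
    | (k+2) =>
      obtain ⟨hd1, hc1⟩ := ih (k+1) (by omega)
      obtain ⟨hd0, hc0⟩ := ih k (by omega)
      rw [show ((k+2 : ℕ) : ℤ) = (k : ℤ) + 2 by push_cast; ring, U_add_two]
      rw [show ((k : ℤ) + 1) = ((k+1 : ℕ) : ℤ) by push_cast; ring]
      constructor
      · refine le_trans (natDegree_sub_le _ _) ?_
        simp only [max_le_iff]
        constructor
        · refine le_trans (natDegree_mul_le) ?_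
          refine le_trans (add_le_add natDegree_mul_le hd1) ?_
          simp [natDegree_X]
          omega
        · omega
      · have hz : (U ℝ ((k:ℕ):ℤ)).coeff (k+2) = 0 :=
          coeff_eq_zero_of_natDegree_lt (by omega)
        rw [coeff_sub, hz, sub_zero, mul_assoc, coeff_ofNat_mul,
          show k+2 = (k+1)+1 by ring, coeff_X_mul, hc1]
        ring

section AW
variable {q : ℝ}

lemma isAWDq_add {f₁ g₁ f₂ g₂ : Polynomial ℝ} (h₁ : IsAWDq q f₁ g₁) (h₂ : IsAWDq q f₂ g₂) :
    IsAWDq q (f₁ + f₂) (g₁ + g₂) := by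
  intro z hz hz2
  simp only [Polynomial.eval_add, h₁ z hz hz2, h₂ z hz hz2]
  ring

lemma isAWDq_Cmul {f g : Polynomial ℝ} (c : ℝ) (h : IsAWDq q f g) :
    IsAWDq q (Polynomial.C c * f) (Polynomial.C c * g) := by
  intro z hz hz2
  simp only [Polynomial.eval_mul, Polynomial.eval_C, h z hz hz2]
  ring

lemma isAWDq_C (c : ℝ) : IsAWDq q (Polynomial.C c) 0 := by
  intro z hz hz2
  simp

lemma sqrtq_pos (hq0 : 0 < q) : 0 < Real.sqrt q := Real.sqrt_pos.mpr hq0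

lemma sqrtq_lt_one (hq0 : 0 < q) (hq1 : q < 1) : Real.sqrt q < 1 := by
  rw [show (1:ℝ) = Real.sqrt 1 by simp]
  exact Real.sqrt_lt_sqrt hq0.le hq1

lemma sqrtq_sub_inv_neg (hq0 : 0 < q) (hq1 : q < 1) : Real.sqrt q - (Real.sqrt q)⁻¹ < 0 := by
  have h0 := sqrtq_pos hq0
  have h1 := sqrtq_lt_one hq0 hq1
  have : 1 < (Real.sqrt q)⁻¹ := (one_lt_inv₀ h0).mpr h1
  linarith

lemma gammaAW_pos (hq0 : 0 < q) (hq1 : q < 1) {n : ℕ} (hn : 1 ≤ n) : 0 < gammaAW q n := by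
  have h0 := sqrtq_pos hq0
  have h1 := sqrtq_lt_one hq0 hq1
  have hnum : Real.sqrt q ^ n - ((Real.sqrt q)⁻¹) ^ n < 0 := by
    have ha : Real.sqrt q ^ n < 1 := pow_lt_one₀ h0.le h1 (by omega)
    have hb : 1 < ((Real.sqrt q)⁻¹) ^ n :=
      one_lt_pow₀ ((one_lt_inv₀ h0).mpr h1) (by omega)
    linarith
  exact div_pos_of_neg_of_neg hnum (sqrtq_sub_inv_neg hq0 hq1)

lemma isAWDq_T (hq0 : 0 < q) (hq1 : q < 1) (n : ℕ) :
    IsAWDq q (Polynomial.Chebyshev.T ℝ ((n+1 : ℕ) : ℤ))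
      (Polynomial.C (gammaAW q (n+1)) * Polynomial.Chebyshev.U ℝ ((n : ℕ) : ℤ)) := by
  intro z hz hz2
  set s := Real.sqrt q with hs
  have hs0 : s ≠ 0 := (sqrtq_pos hq0).ne'
  have hsz : s * z ≠ 0 := mul_ne_zero hs0 hz
  have hsz' : s⁻¹ * z ≠ 0 := mul_ne_zero (inv_ne_zero hs0) hz
  have hzz : z - z⁻¹ ≠ 0 := by
    intro h
    apply hz2
    field_simp at h
    rw [sq]; linarith
  have hss : Real.sqrt q - (Real.sqrt q)⁻¹ ≠ 0 := (sqrtq_sub_inv_neg hq0 hq1).ne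
  have hT1 := evalT (n+1) (s*z) hsz
  have hT2 := evalT (n+1) (s⁻¹*z) hsz'
  have hU := evalU n z hz
  have hEu : (Polynomial.Chebyshev.U ℝ ((n:ℕ):ℤ)).eval ((z + z⁻¹)/2)
      = (z ^ (n+1) - (z⁻¹) ^ (n+1)) / (z - z⁻¹) := by
    rw [eq_div_iff hzz, ← hU]; ring
  rw [show (s * z + s⁻¹ * z⁻¹)/2 = ((s*z) + (s*z)⁻¹)/2 by rw [mul_inv],
      show (s⁻¹ * z + s * z⁻¹)/2 = ((s⁻¹*z) + (s⁻¹*z)⁻¹)/2 by rw [mul_inv, inv_inv],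
      hT1, hT2, Polynomial.eval_mul, Polynomial.eval_C, hEu]
  rw [gammaAW, ← hs]
  have hss' : s - s⁻¹ ≠ 0 := by rw [hs]; exact hss
  have d1 : (s - s⁻¹) * (z - z⁻¹) ≠ 0 := mul_ne_zero hss' hzz
  have d2 : (s - s⁻¹) * (z - z⁻¹) / 2 ≠ 0 := div_ne_zero d1 two_ne_zero
  rw [div_mul_div_comm, div_eq_div_iff d1 d2]
  simp only [mul_inv, inv_inv]
  ring

open Polynomial in
lemma exists_aw (hq0 : 0 < q) (hq1 : q < 1) :
    ∀ N : ℕ, ∀ f : Polynomial ℝ, f.natDegree ≤ N →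
      ∃ g, IsAWDq q f g ∧ g.natDegree ≤ N - 1 ∧ (N = 0 → g = 0) ∧
        g.coeff (N-1) = gammaAW q N * f.coeff N := by
  intro N
  induction N with
  | zero =>
    intro f hf
    refine ⟨0, ?_, by simp, fun _ => rfl, ?_⟩
    · rw [eq_C_of_natDegree_le_zero hf]; exact isAWDq_C _
    · simp [gammaAW]
  | succ N ih =>
    intro f hf
    set c : ℝ := f.coeff (N+1) / 2 ^ N with hc
    set r : Polynomial ℝ := f - C c * Chebyshev.T ℝ ((N+1 : ℕ) : ℤ) with hr
    have hrd : r.natDegree ≤ N := by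
      rw [natDegree_le_iff_coeff_eq_zero]
      intro m hm
      rcases eq_or_lt_of_le (Nat.succ_le_of_lt hm) with h | h
      · rw [hr, coeff_sub, coeff_C_mul, ← h, (degT (N+1)).2]
        rw [hc]
        field_simp
        simp
      · rw [hr, coeff_sub, coeff_C_mul,
          coeff_eq_zero_of_natDegree_lt (lt_of_le_of_lt hf h),
          coeff_eq_zero_of_natDegree_lt (lt_of_le_of_lt (degT (N+1)).1 h)]
        ring
    obtain ⟨gr, hgr, hgrd, hgr0, _⟩ := ih r hrd
    refine ⟨C (c * gammaAW q (N+1)) * Chebyshev.U ℝ ((N : ℕ) : ℤ) + gr, ?_, ?_, ?_, ?_⟩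
    · have := isAWDq_add (isAWDq_Cmul c (isAWDq_T hq0 hq1 N)) hgr
      rw [show C c * Chebyshev.T ℝ ((N+1:ℕ):ℤ) + r = f by rw [hr]; ring] at this
      rwa [← mul_assoc, ← Polynomial.C_mul] at this
    · refine le_trans (natDegree_add_le _ _) ?_
      simp only [Nat.add_sub_cancel, max_le_iff]
      refine ⟨le_trans (natDegree_C_mul_le _ _) (degU N).1, by omega⟩
    · omega
    · have hgrN : gr.coeff N = 0 := by
        rcases Nat.eq_zero_or_pos N with h | h
        · rw [hgr0 h]; simp
        · exact coeff_eq_zero_of_natDegree_lt (by omega)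
      rw [Nat.add_sub_cancel, coeff_add, coeff_C_mul, (degU N).2, hgrN, add_zero, hc]
      have h2 : (2:ℝ) ^ N ≠ 0 := by positivity
      field_simp

open Polynomial in
lemma isAWDq_unique (hq0 : 0 < q) (hq1 : q < 1) {f g₁ g₂ : Polynomial ℝ}
    (h₁ : IsAWDq q f g₁) (h₂ : IsAWDq q f g₂) : g₁ = g₂ := by
  apply Polynomial.eq_of_infinite_eval_eq
  apply Set.Infinite.mono (s := Set.Ioi (1:ℝ)) _ (Set.Ioi_infinite 1)
  intro x hx
  rw [Set.mem_Ioi] at hx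
  set z : ℝ := x + Real.sqrt (x^2 - 1) with hz
  have hx2 : (0:ℝ) ≤ x^2 - 1 := by nlinarith
  have hzx : 1 < z := by
    have := Real.sqrt_nonneg (x^2 - 1)
    rw [hz]; linarith
  have hz0 : z ≠ 0 := by linarith
  have hz2 : z^2 ≠ 1 := by nlinarith
  have hzinv : z⁻¹ = x - Real.sqrt (x^2-1) := by
    apply inv_eq_of_mul_eq_one_right
    rw [hz]
    have : Real.sqrt (x^2-1) * Real.sqrt (x^2-1) = x^2 - 1 :=
      Real.mul_self_sqrt hx2
    nlinarith [this]
  have hxz : x = (z + z⁻¹)/2 := by rw [hzinv, hz]; ring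
  show g₁.eval x = g₂.eval x
  rw [hxz, h₁ z hz0 hz2, h₂ z hz0 hz2]

lemma awDq_spec (hq0 : 0 < q) (hq1 : q < 1) (f : Polynomial ℝ) :
    IsAWDq q f (awDq q f) := by
  have h : ∃ g, IsAWDq q f g := by
    obtain ⟨g, hg, -⟩ := exists_aw hq0 hq1 f.natDegree f le_rfl
    exact ⟨g, hg⟩
  rw [awDq]
  exact (dif_pos h) ▸ h.choose_spec

lemma awDq_eq (hq0 : 0 < q) (hq1 : q < 1) {f g : Polynomial ℝ} (h : IsAWDq q f g) :
    awDq q f = g :=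
  isAWDq_unique hq0 hq1 (awDq_spec hq0 hq1 f) h

open Polynomial in
lemma awDq_deg (hq0 : 0 < q) (hq1 : q < 1) {f : Polynomial ℝ} (hf : 1 ≤ f.natDegree) :
    (awDq q f).natDegree = f.natDegree - 1 ∧
      (awDq q f).leadingCoeff = gammaAW q f.natDegree * f.leadingCoeff := by
  obtain ⟨g, hg, hd, -, hcoef⟩ := exists_aw hq0 hq1 f.natDegree f le_rfl
  have hf0 : f ≠ 0 := fun h => by simp [h] at hf
  have hlc : gammaAW q f.natDegree * f.leadingCoeff ≠ 0 :=
    mul_ne_zero (gammaAW_pos hq0 hq1 hf).ne' (leadingCoeff_ne_zero.mpr hf0)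
  rw [awDq_eq hq0 hq1 hg]
  have hcoef' : g.coeff (f.natDegree - 1) ≠ 0 := by rw [hcoef]; exact hlc
  have hdeq : g.natDegree = f.natDegree - 1 :=
    le_antisymm hd (le_natDegree_of_ne_zero hcoef')
  exact ⟨hdeq, by rw [leadingCoeff, hdeq, hcoef]; rfl⟩

end AW

section Ints
open Polynomial MeasureTheory
variable {a b : ℝ} {w : ℝ → ℝ}

lemma intOn (hint : ∀ k : ℕ, IntegrableOn (fun x => x ^ k * w x) (Set.Ioo a b))
    (f : Polynomial ℝ) : IntegrableOn (fun x => f.eval x * w x) (Set.Ioo a b) := by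
  have h : (fun x => f.eval x * w x) = fun x => ∑ k ∈ f.support, f.coeff k * (x ^ k * w x) := by
    funext x
    rw [eval_eq_sum, Polynomial.sum, Finset.sum_mul]
    exact Finset.sum_congr rfl fun k _ => by ring
  rw [h]
  exact integrable_finset_sum _ fun k _ => (hint k).const_mul _

lemma I_add (hint : ∀ k : ℕ, IntegrableOn (fun x => x ^ k * w x) (Set.Ioo a b))
    (f g : Polynomial ℝ) :
    ∫ x in Set.Ioo a b, (f + g).eval x * w x =
      (∫ x in Set.Ioo a b, f.eval x * w x) + ∫ x in Set.Ioo a b, g.eval x * w x := by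
  rw [← integral_add (intOn hint f) (intOn hint g)]
  congr 1
  funext x
  rw [eval_add]
  ring

lemma I_Cmul (c : ℝ) (f : Polynomial ℝ) :
    ∫ x in Set.Ioo a b, (C c * f).eval x * w x = c * ∫ x in Set.Ioo a b, f.eval x * w x := by
  simp only [eval_mul, eval_C, mul_assoc]
  exact integral_const_mul c _

lemma orth_low
    (hint : ∀ k : ℕ, IntegrableOn (fun x => x ^ k * w x) (Set.Ioo a b))
    {P : ℕ → Polynomial ℝ} (hmonic : ∀ n, (P n).Monic) (hdeg : ∀ n, (P n).natDegree = n)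
    (horth : ∀ m n, m ≠ n → ∫ x in Set.Ioo a b, (P m).eval x * (P n).eval x * w x = 0) :
    ∀ d : ℕ, ∀ f : Polynomial ℝ, f.natDegree ≤ d → ∀ k, d < k →
      ∫ x in Set.Ioo a b, (f * P k).eval x * w x = 0 := by
  have orth' : ∀ m n, m ≠ n → ∫ x in Set.Ioo a b, (P m * P n).eval x * w x = 0 := by
    intro m n h
    simp only [eval_mul]
    exact horth m n h
  intro d
  induction d with
  | zero =>
    intro f hf k hk
    have h1 : P 0 = 1 := ((hmonic 0).natDegree_eq_zero).mp (hdeg 0)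
    rw [eq_C_of_natDegree_le_zero hf,
      show C (f.coeff 0) * P k = C (f.coeff 0) * (P 0 * P k) by rw [h1, one_mul],
      I_Cmul, orth' 0 k (by omega), mul_zero]
  | succ d ih =>
    intro f hf k hk
    set c : ℝ := f.coeff (d+1) with hc
    set r : Polynomial ℝ := f - C c * P (d+1) with hr
    have hP1 : (P (d+1)).coeff (d+1) = 1 := by
      have := (hmonic (d+1)).coeff_natDegree
      rwa [hdeg (d+1)] at this
    have hrd : r.natDegree ≤ d := by
      rw [natDegree_le_iff_coeff_eq_zero]
      intro m hm
      rcases eq_or_lt_of_le (Nat.succ_le_of_lt hm) with h | h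
      · rw [hr, coeff_sub, coeff_C_mul, ← h, hP1, mul_one, hc, sub_self]
      · rw [hr, coeff_sub, coeff_C_mul,
          coeff_eq_zero_of_natDegree_lt (lt_of_le_of_lt hf h),
          coeff_eq_zero_of_natDegree_lt (by rw [hdeg]; exact h)]
        ring
    have hsplit : f * P k = C c * (P (d+1) * P k) + r * P k := by
      rw [hr]; ring
    rw [hsplit, I_add hint, I_Cmul, orth' (d+1) k (by omega), mul_zero, zero_add]
    exact ih r hrd k (by omega)

lemma sq_pos (hab : a < b) (hw : ∀ x ∈ Set.Ioo a b, 0 < w x)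
    (hint : ∀ k : ℕ, IntegrableOn (fun x => x ^ k * w x) (Set.Ioo a b))
    {p : Polynomial ℝ} (hp : p ≠ 0) :
    0 < ∫ x in Set.Ioo a b, (p * p).eval x * w x := by
  set g : ℝ → ℝ := fun x => (p * p).eval x * w x with hg
  have h1 : 0 ≤ᵐ[volume.restrict (Set.Ioo a b)] g := by
    filter_upwards [ae_restrict_mem measurableSet_Ioo] with x hx
    simp only [hg, eval_mul]
    exact mul_nonneg (mul_self_nonneg _) (hw x hx).le
  have h2 : IntegrableOn g (Set.Ioo a b) := intOn hint _
  refine (setIntegral_pos_iff_support_of_nonneg_ae h1 h2).2 ?_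
  have hsub : Set.Ioo a b \ {x | p.IsRoot x} ⊆ Function.support g ∩ Set.Ioo a b := by
    rintro x ⟨hx, hroot⟩
    refine ⟨?_, hx⟩
    simp only [Function.mem_support, hg, eval_mul]
    have hne : p.eval x ≠ 0 := fun h => hroot h
    exact mul_ne_zero (mul_ne_zero hne hne) (hw x hx).ne'
  calc (0:ENNReal) < volume (Set.Ioo a b) := by
        rw [Real.volume_Ioo]; exact ENNReal.ofReal_pos.mpr (sub_pos.mpr hab)
    _ = volume (Set.Ioo a b \ {x | p.IsRoot x}) := by
        rw [measure_diff_null (((Polynomial.finite_setOf_isRoot hp)).measure_zero _)]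
    _ ≤ volume (Function.support g ∩ Set.Ioo a b) := measure_mono hsub

end Ints

theorem stmt2 (q : ℝ) (hq0 : 0 < q) (hq1 : q < 1)
    (a b : ℝ) (hab : a < b)
    (w : ℝ → ℝ) (hw : ∀ x ∈ Set.Ioo a b, 0 < w x)
    (P : ℕ → Polynomial ℝ) (hmonic : ∀ n, (P n).Monic) (hdeg : ∀ n, (P n).natDegree = n)
    (hint : ∀ k : ℕ, IntegrableOn (fun x => x ^ k * w x) (Set.Ioo a b))
    (horth : ∀ m n, m ≠ n → ∫ x in Set.Ioo a b, (P m).eval x * (P n).eval x * w x = 0)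
    (π : Polynomial ℝ) (hπ : π.degree ≤ 4)
    (am2 am1 a0 ap1 ap2 : ℕ → ℝ)
    (hstr : ∀ n, 2 ≤ n →
      π * awDq q (awDq q (P n)) =
        C (am2 n) * P (n - 2) + C (am1 n) * P (n - 1) + C (a0 n) * P n +
          C (ap1 n) * P (n + 1) + C (ap2 n) * P (n + 2))
    (ham2 : ∀ n, 2 ≤ n → am2 n ≠ 0) :
    (∀ m n, 2 ≤ m → 2 ≤ n → m ≠ n →
      ∫ x in Set.Ioo a b, (awDq q (awDq q (P m))).eval x * (awDq q (awDq q (P n))).eval x *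
        π.eval x * w x = 0) ∧
    (∀ n, 2 ≤ n →
      ∫ x in Set.Ioo a b, ((awDq q (awDq q (P n))).eval x) ^ 2 * π.eval x * w x ≠ 0) := by
  have hQ : ∀ n, 2 ≤ n → (awDq q (awDq q (P n))).natDegree = n - 2 ∧
      (awDq q (awDq q (P n))).leadingCoeff ≠ 0 := by
    intro n hn
    have h1 := awDq_deg hq0 hq1 (f := P n) (by rw [hdeg]; omega)
    have h2 := awDq_deg hq0 hq1 (f := awDq q (P n)) (by rw [h1.1, hdeg]; omega)
    constructor
    · rw [h2.1, h1.1, hdeg]; omega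
    · rw [h2.2, h1.2, h1.1, (hmonic n).leadingCoeff, mul_one, hdeg]
      exact mul_ne_zero (gammaAW_pos hq0 hq1 (by omega)).ne'
        (gammaAW_pos hq0 hq1 (by omega)).ne'
  have hlow := orth_low hint hmonic hdeg horth
  have expand : ∀ (c1 c2 c3 c4 c5 : ℝ) (p1 p2 p3 p4 p5 g : Polynomial ℝ),
      (∫ x in Set.Ioo a b,
        ((C c1 * p1 + C c2 * p2 + C c3 * p3 + C c4 * p4 + C c5 * p5) * g).eval x * w x) =
      c1 * (∫ x in Set.Ioo a b, (g * p1).eval x * w x) +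
      c2 * (∫ x in Set.Ioo a b, (g * p2).eval x * w x) +
      c3 * (∫ x in Set.Ioo a b, (g * p3).eval x * w x) +
      c4 * (∫ x in Set.Ioo a b, (g * p4).eval x * w x) +
      c5 * (∫ x in Set.Ioo a b, (g * p5).eval x * w x) := by
    intro c1 c2 c3 c4 c5 p1 p2 p3 p4 p5 g
    rw [show (C c1 * p1 + C c2 * p2 + C c3 * p3 + C c4 * p4 + C c5 * p5) * g
        = C c1 * (g * p1) + (C c2 * (g * p2) + (C c3 * (g * p3) +
          (C c4 * (g * p4) + C c5 * (g * p5)))) by ring,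
      I_add hint, I_add hint, I_add hint, I_add hint,
      I_Cmul, I_Cmul, I_Cmul, I_Cmul, I_Cmul]
    ring
  have main0 : ∀ m n, 2 ≤ m → 2 ≤ n → n < m →
      ∫ x in Set.Ioo a b, (awDq q (awDq q (P m))).eval x * (awDq q (awDq q (P n))).eval x *
        π.eval x * w x = 0 := by
    intro m n hm hn hlt
    have e1 : (∫ x in Set.Ioo a b, (awDq q (awDq q (P m))).eval x *
          (awDq q (awDq q (P n))).eval x * π.eval x * w x)
        = ∫ x in Set.Ioo a b,
            ((π * awDq q (awDq q (P m))) * awDq q (awDq q (P n))).eval x * w x := by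
      congr 1
      funext x
      simp only [Polynomial.eval_mul]
      ring
    rw [e1, hstr m hm, expand]
    have hz : ∀ j, n - 2 < j →
        (∫ x in Set.Ioo a b, (awDq q (awDq q (P n)) * P j).eval x * w x) = 0 := by
      intro j hj
      exact hlow (n-2) _ (le_of_eq (hQ n hn).1) j hj
    rw [hz (m-2) (by omega), hz (m-1) (by omega), hz m (by omega),
      hz (m+1) (by omega), hz (m+2) (by omega)]
    ring
  constructor
  · intro m n hm hn hmn
    rcases hmn.lt_or_gt with h | h
    · rw [show (∫ x in Set.Ioo a b, (awDq q (awDq q (P m))).eval x *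
            (awDq q (awDq q (P n))).eval x * π.eval x * w x)
          = ∫ x in Set.Ioo a b, (awDq q (awDq q (P n))).eval x *
            (awDq q (awDq q (P m))).eval x * π.eval x * w x by congr 1; funext x; ring]
      exact main0 n m hn hm h
    · exact main0 m n hm hn h
  · intro n hn
    set Q : Polynomial ℝ := awDq q (awDq q (P n)) with hQdef
    obtain ⟨hQd, hQl⟩ := hQ n hn
    have e1 : (∫ x in Set.Ioo a b, (Q.eval x) ^ 2 * π.eval x * w x)
        = ∫ x in Set.Ioo a b, ((π * Q) * Q).eval x * w x := by
      congr 1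
      funext x
      simp only [Polynomial.eval_mul]
      ring
    rw [e1, hstr n hn, expand]
    have hz : ∀ j, n - 2 < j →
        (∫ x in Set.Ioo a b, (Q * P j).eval x * w x) = 0 := by
      intro j hj
      exact hlow (n-2) _ (le_of_eq hQd) j hj
    rw [hz (n-1) (by omega), hz n (by omega), hz (n+1) (by omega), hz (n+2) (by omega)]
    simp only [mul_zero, add_zero]
    -- remaining: am2 n * ∫ (Q * P (n-2)) ≠ 0
    set L : ℝ := Q.leadingCoeff with hL
    set r : Polynomial ℝ := Q - C L * P (n-2) with hr
    have hPc : (P (n-2)).coeff (n-2) = 1 := by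
      have := (hmonic (n-2)).coeff_natDegree
      rwa [hdeg (n-2)] at this
    have hrle : r.natDegree ≤ n - 2 := by
      rw [hr]
      refine le_trans (natDegree_sub_le _ _) ?_
      simp only [max_le_iff]
      exact ⟨le_of_eq hQd, le_trans (natDegree_C_mul_le _ _) (le_of_eq (hdeg (n-2)))⟩
    have hrc : r.coeff (n-2) = 0 := by
      rw [hr, coeff_sub, coeff_C_mul, hPc, mul_one, hL, ← hQd]
      exact sub_self _
    have hsplit : Q * P (n-2) = C L * (P (n-2) * P (n-2)) + r * P (n-2) := by
      rw [hr]; ring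
    have hr0 : (∫ x in Set.Ioo a b, (r * P (n-2)).eval x * w x) = 0 := by
      rcases eq_or_ne r 0 with h | h
      · simp [h]
      · have hlt : r.natDegree < n - 2 := by
          rcases lt_or_eq_of_le hrle with h' | h'
          · exact h'
          · exfalso
            exact (leadingCoeff_ne_zero.mpr h)
              (by rw [show r.leadingCoeff = r.coeff r.natDegree from rfl, h']; exact hrc)
        exact hlow r.natDegree r le_rfl (n-2) hlt
    rw [hsplit, I_add hint, I_Cmul, hr0, add_zero]
    exact mul_ne_zero (ham2 n hn) (mul_ne_zero hQl
      (sq_pos hab hw hint (hmonic (n-2)).ne_zero).ne')
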